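/- A legal history H is conflict-opaque if and only if its conflict graph CG(H) is acyclic. -/

import Mathlib

/-!
A t-sequential history orders its transactions linearly by real time. If such an `S` respects
`≺_H^RT` and `≺_H^CO`, every edge of `CG(H)` is an edge of that strict order, so `CG(H)` has no
cycle. Conversely, if `CG(H)` is acyclic, list the transactions along a topological sort of
`CG(H)` and let `S` run the transactions of the completion `H̄` one after the other in that order.
Then `S` is t-sequential and respects `≺_H^RT` and `≺_H^CO` by construction. It is legal because
the events that decide a read (the read itself, the commit of the latest writer before it, and the
commits of the other writers of the same object) lie pairwise in one transaction or in two
transactions joined by a conflict edge, so `S` orders them as `H` does.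
-/

namespace STM

/-- Transactional events: reads (with `none` meaning the read returned abort `A`),
writes, commits and aborts, indexed by transaction ids. -/
inductive Ev (Tid Obj Val : Type) : Type where
  | read  (t : Tid) (x : Obj) (v : Option Val)
  | write (t : Tid) (x : Obj) (v : Val)
  | commit (t : Tid)
  | abort (t : Tid)

/-- A history is a finite sequence of pairwise distinct events. -/
structure History (Tid Obj Val : Type) : Type where
  evs : List (Ev Tid Obj Val)
  nodup : evs.Nodup

variable {Tid Obj Val : Type}

def Ev.tid : Ev Tid Obj Val → Tid
  | .read t _ _ => t
  | .write t _ _ => t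
  | .commit t => t
  | .abort t => t

namespace History

def Mem (H : History Tid Obj Val) (e : Ev Tid Obj Val) : Prop := e ∈ H.evs

/-- `e1 <_H e2` : e1 occurs strictly before e2 in H. -/
def Lt (H : History Tid Obj Val) (e1 e2 : Ev Tid Obj Val) : Prop :=
  ∃ i j : Fin H.evs.length, i < j ∧ H.evs.get i = e1 ∧ H.evs.get j = e2

/-- Two histories are equivalent if they have the same set of events. -/
def Equiv (H1 H2 : History Tid Obj Val) : Prop :=
  ∀ e, H1.Mem e ↔ H2.Mem e

/-- `x` belongs to the write set of transaction `t` in `H`. -/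
def Wset (H : History Tid Obj Val) (t : Tid) (x : Obj) : Prop :=
  ∃ v, H.Mem (Ev.write t x v)

/-- The set of transactions appearing in `H`. -/
def txns (H : History Tid Obj Val) : Set Tid := {t | ∃ e, H.Mem e ∧ e.tid = t}

def committed (H : History Tid Obj Val) (t : Tid) : Prop := H.Mem (Ev.commit t)

def aborted (H : History Tid Obj Val) (t : Tid) : Prop := H.Mem (Ev.abort t)

def incomplete (H : History Tid Obj Val) (t : Tid) : Prop :=
  t ∈ H.txns ∧ ¬ H.committed t ∧ ¬ H.aborted t

/-- Event-level conflict order of `H`: w-w, w-r and r-w conflicts,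
oriented by the order of events in `H`. -/
def COe (H : History Tid Obj Val) (e1 e2 : Ev Tid Obj Val) : Prop :=
  H.Lt e1 e2 ∧
  ((∃ t1 t2 x, t1 ≠ t2 ∧ e1 = Ev.commit t1 ∧ e2 = Ev.commit t2 ∧
      H.Wset t1 x ∧ H.Wset t2 x) ∨
   (∃ t1 t2 x v, t1 ≠ t2 ∧ e1 = Ev.commit t1 ∧ e2 = Ev.read t2 x (some v) ∧
      H.Wset t1 x) ∨
   (∃ t1 t2 x v, t1 ≠ t2 ∧ e1 = Ev.read t1 x (some v) ∧ e2 = Ev.commit t2 ∧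
      H.Wset t2 x))

/-- Transaction-level conflict order `T_{t1} ≺_H^CO T_{t2}`. -/
def CO (H : History Tid Obj Val) (t1 t2 : Tid) : Prop :=
  ∃ e1 e2, e1.tid = t1 ∧ e2.tid = t2 ∧ H.COe e1 e2

/-- Real-time order: `t1` completes before `t2` begins
(every event of `t1` precedes every event of `t2`). -/
def RT (H : History Tid Obj Val) (t1 t2 : Tid) : Prop :=
  t1 ∈ H.txns ∧ t2 ∈ H.txns ∧ t1 ≠ t2 ∧
  ∀ e1 e2, H.Mem e1 → H.Mem e2 → e1.tid = t1 → e2.tid = t2 → H.Lt e1 e2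

/-- A history is t-sequential if every two transactions are related
by the real-time order. -/
def TSequential (H : History Tid Obj Val) : Prop :=
  ∀ t1 t2, t1 ∈ H.txns → t2 ∈ H.txns → t1 ≠ t2 → H.RT t1 t2 ∨ H.RT t2 t1

/-- `H` is valid: every successful read reads a value written by a
transaction that committed before it. -/
def Valid (H : History Tid Obj Val) : Prop :=
  ∀ t x v, H.Mem (Ev.read t x (some v)) →
    ∃ j, H.Lt (Ev.commit j) (Ev.read t x (some v)) ∧ H.Mem (Ev.write j x v)

/-- `H` is legal: for every successful read, the transaction of its last write
(the latest commit preceding the read among transactions writing `x`)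
wrote the value `v` that was read. -/
def Legal (H : History Tid Obj Val) : Prop :=
  ∀ t x v, H.Mem (Ev.read t x (some v)) →
    ∃ i, H.Lt (Ev.commit i) (Ev.read t x (some v)) ∧ H.Wset i x ∧
      (∀ j, H.Lt (Ev.commit j) (Ev.read t x (some v)) → H.Wset j x →
        j = i ∨ H.Lt (Ev.commit j) (Ev.commit i)) ∧
      H.Mem (Ev.write i x v)

/-- `Hc` is the completion `H̄` of `H`: an abort event is inserted
immediately after the last event of every incomplete transaction. -/
def IsCompletion (H Hc : History Tid Obj Val) : Prop :=
  (∀ e, Hc.Mem e ↔ (H.Mem e ∨ ∃ t, H.incomplete t ∧ e = Ev.abort t)) ∧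
  (∀ e1 e2, H.Mem e1 → H.Mem e2 → (H.Lt e1 e2 ↔ Hc.Lt e1 e2)) ∧
  (∀ t, H.incomplete t →
    (∀ e, H.Mem e → e.tid = t → Hc.Lt e (Ev.abort t)) ∧
    (∀ e, H.Mem e → (Hc.Lt (Ev.abort t) e ↔
       ∀ e', H.Mem e' → e'.tid = t → H.Lt e' e)))

/-- Edge of the conflict graph `CG(H)`: real-time or conflict order. -/
def CGedge (H : History Tid Obj Val) (t1 t2 : Tid) : Prop :=
  H.RT t1 t2 ∨ H.CO t1 t2

/-- The conflict graph of `H` is acyclic. -/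
def CGAcyclic (H : History Tid Obj Val) : Prop :=
  ∀ t, ¬ Relation.TransGen H.CGedge t t

/-- `H` is conflict-opaque: `H` is valid and there is a t-sequential legal
history `S` equivalent to some completion `H̄` of `H` respecting
`≺_H^RT` and `≺_H^CO`. -/
def CoOpaque (H : History Tid Obj Val) : Prop :=
  H.Valid ∧ ∃ Hc S : History Tid Obj Val, H.IsCompletion Hc ∧
    S.TSequential ∧ S.Legal ∧ S.Equiv Hc ∧
    (∀ t1 t2, H.RT t1 t2 → S.RT t1 t2) ∧
    (∀ t1 t2, H.CO t1 t2 → S.CO t1 t2)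

/-- `H` is opaque: as conflict-opacity, but `S` need only respect `≺_H^RT`. -/
def Opaque (H : History Tid Obj Val) : Prop :=
  H.Valid ∧ ∃ Hc S : History Tid Obj Val, H.IsCompletion Hc ∧
    S.TSequential ∧ S.Legal ∧ S.Equiv Hc ∧
    (∀ t1 t2, H.RT t1 t2 → S.RT t1 t2)

end History
end STM

namespace List

variable {α β : Type*}

theorem pair_sublist_iff_exists_fin {l : List α} {a b : α} :
    [a, b] <+ l ↔ ∃ i j : Fin l.length, i < j ∧ l.get i = a ∧ l.get j = b := by
  constructor
  · intro h
    obtain ⟨r₁, r₂, rfl, ha, hb⟩ := cons_sublist_iff.1 h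
    obtain ⟨i, hi, rfl⟩ := mem_iff_getElem.1 ha
    obtain ⟨j, hj, rfl⟩ := mem_iff_getElem.1 (singleton_sublist.1 hb)
    refine ⟨⟨i, by simp; omega⟩, ⟨r₁.length + j, by simp; omega⟩, Fin.lt_def.2 (by simp; omega),
      by simp [getElem_append_left hi], by simp⟩
  · rintro ⟨i, j, hij, rfl, rfl⟩
    refine cons_sublist_iff.2 ⟨l.take j, l.drop j, (take_append_drop _ _).symm, ?_, ?_⟩
    · exact mem_iff_getElem.2 ⟨i, by simp; omega, by simp⟩
    · exact singleton_sublist.2 (mem_iff_getElem.2 ⟨0, by simp, by simp⟩)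

theorem Nodup.pair_sublist_iff [DecidableEq α] {l : List α} (hl : l.Nodup) {a b : α} :
    [a, b] <+ l ↔ a ∈ l ∧ b ∈ l ∧ l.idxOf a < l.idxOf b := by
  rw [pair_sublist_iff_exists_fin]
  constructor
  · rintro ⟨i, j, hij, rfl, rfl⟩
    exact ⟨get_mem _ _, get_mem _ _, by simpa [hl.idxOf_getElem] using hij⟩
  · rintro ⟨ha, hb, hab⟩
    exact ⟨⟨_, idxOf_lt_length_of_mem ha⟩, ⟨_, idxOf_lt_length_of_mem hb⟩, hab,
      idxOf_get _, idxOf_get _⟩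

theorem pair_sublist_or_pair_sublist {l : List α} {a b : α} (ha : a ∈ l) (hb : b ∈ l)
    (hab : a ≠ b) : [a, b] <+ l ∨ [b, a] <+ l := by
  obtain ⟨i, rfl⟩ := get_of_mem ha
  obtain ⟨j, rfl⟩ := get_of_mem hb
  simp only [pair_sublist_iff_exists_fin]
  rcases lt_trichotomy i j with h | rfl | h
  · exact Or.inl ⟨i, j, h, rfl, rfl⟩
  · exact absurd rfl hab
  · exact Or.inr ⟨j, i, h, rfl, rfl⟩

theorem pair_sublist_append_iff {l₁ l₂ : List α} {a b : α} :
    [a, b] <+ l₁ ++ l₂ ↔ [a, b] <+ l₁ ∨ (a ∈ l₁ ∧ b ∈ l₂) ∨ [a, b] <+ l₂ := by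
  rw [sublist_append_iff]
  constructor
  · rintro ⟨_ | ⟨x, _ | ⟨y, _ | _⟩⟩, r, h, h₁, h₂⟩ <;> simp at h <;> grind
  · rintro (h | ⟨h₁, h₂⟩ | h)
    · exact ⟨[a, b], [], by simp, h, nil_sublist _⟩
    · exact ⟨[a], [b], rfl, singleton_sublist.2 h₁, singleton_sublist.2 h₂⟩
    · exact ⟨[], [a, b], rfl, nil_sublist _, h⟩

theorem pair_sublist_flatMap_iff {L : List α} {f : α → List β} {b₁ b₂ : β} :
    [b₁, b₂] <+ L.flatMap f ↔
      (∃ a ∈ L, [b₁, b₂] <+ f a) ∨ ∃ a₁ a₂, [a₁, a₂] <+ L ∧ b₁ ∈ f a₁ ∧ b₂ ∈ f a₂ := by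
  induction L with
  | nil => simp
  | cons a L ih =>
    simp only [flatMap_cons, pair_sublist_append_iff, ih, mem_cons, mem_flatMap, sublist_cons_iff]
    grind

end List

open List

open Relation in
theorem Relation.exists_topologicalSort {α : Type*} {r : α → α → Prop}
    (hr : ∀ a, ¬ TransGen r a a) (l : List α) :
    ∃ ts : List α, ts.Nodup ∧ (∀ a, a ∈ ts ↔ a ∈ l) ∧
      ∀ a ∈ ts, ∀ b ∈ ts, r a b → [a, b] <+ ts := by
  classical
  have : Std.Antisymm (ReflTransGen r) := ⟨fun a b hab hba => by
    rcases reflTransGen_iff_eq_or_transGen.1 hab with rfl | hab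
    · rfl
    rcases reflTransGen_iff_eq_or_transGen.1 hba with rfl | hba
    · rfl
    exact absurd (hba.trans hab) (hr b)⟩
  have : IsPartialOrder α (ReflTransGen r) := {}
  obtain ⟨s, hs, hrs⟩ := extend_partialOrder (ReflTransGen r)
  refine ⟨l.dedup.insertionSort s, (List.perm_insertionSort s _).nodup_iff.2 l.nodup_dedup,
    fun a => by rw [(List.perm_insertionSort s _).mem_iff, List.mem_dedup], fun a ha b hb hab => ?_⟩
  have hne : a ≠ b := by rintro rfl; exact hr a (TransGen.single hab)
  refine (List.pair_sublist_or_pair_sublist ha hb hne).resolve_right fun hba => hne ?_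
  have hsba : s b a := List.pairwise_pair.1 ((List.pairwise_insertionSort s _).sublist hba)
  exact antisymm (hrs _ _ (ReflTransGen.single hab)) hsba

namespace STM.History

variable {Tid Obj Val : Type} {H S Hc : History Tid Obj Val} {e e₁ e₂ e₃ a : Ev Tid Obj Val}
  {t t₁ t₂ t₃ : Tid} {x : Obj} {ts : List Tid} {hts : ts.Nodup}

theorem lt_iff_sublist : H.Lt e₁ e₂ ↔ [e₁, e₂] <+ H.evs :=
  List.pair_sublist_iff_exists_fin.symm

theorem lt_iff_idxOf_lt [DecidableEq (Ev Tid Obj Val)] :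
    H.Lt e₁ e₂ ↔ H.Mem e₁ ∧ H.Mem e₂ ∧ H.evs.idxOf e₁ < H.evs.idxOf e₂ :=
  lt_iff_sublist.trans H.nodup.pair_sublist_iff

theorem Lt.mem_left (h : H.Lt e₁ e₂) : H.Mem e₁ :=
  (lt_iff_sublist.1 h).subset (List.mem_cons_self ..)

theorem Lt.mem_right (h : H.Lt e₁ e₂) : H.Mem e₂ :=
  (lt_iff_sublist.1 h).subset (by simp)

theorem Lt.asymm (h : H.Lt e₁ e₂) : ¬ H.Lt e₂ e₁ := by
  classical
  rw [lt_iff_idxOf_lt] at h ⊢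
  omega

theorem Lt.trans (h₁₂ : H.Lt e₁ e₂) (h₂₃ : H.Lt e₂ e₃) : H.Lt e₁ e₃ := by
  classical
  rw [lt_iff_idxOf_lt] at h₁₂ h₂₃ ⊢
  exact ⟨h₁₂.1, h₂₃.2.1, h₁₂.2.2.trans h₂₃.2.2⟩

theorem lt_or_lt_of_ne (h₁ : H.Mem e₁) (h₂ : H.Mem e₂) (hne : e₁ ≠ e₂) :
    H.Lt e₁ e₂ ∨ H.Lt e₂ e₁ := by
  simpa only [lt_iff_sublist] using List.pair_sublist_or_pair_sublist h₁ h₂ hne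

theorem Legal.valid (h : H.Legal) : H.Valid := fun t x v hr =>
  let ⟨i, hlt, _, _, hw⟩ := h t x v hr
  ⟨i, hlt, hw⟩

theorem Wset.mono (hsub : ∀ e, H.Mem e → S.Mem e) (h : H.Wset t x) : S.Wset t x :=
  let ⟨v, hv⟩ := h
  ⟨v, hsub _ hv⟩

theorem COe.mono (hsub : ∀ e, H.Mem e → S.Mem e) (h : H.COe e₁ e₂) (hlt : S.Lt e₁ e₂) :
    S.COe e₁ e₂ := by
  refine ⟨hlt, ?_⟩
  rcases h.2 with ⟨a, b, x, hab, rfl, rfl, ha, hb⟩ | ⟨a, b, x, v, hab, rfl, rfl, ha⟩ |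
    ⟨a, b, x, v, hab, rfl, rfl, hb⟩
  · exact Or.inl ⟨a, b, x, hab, rfl, rfl, ha.mono hsub, hb.mono hsub⟩
  · exact Or.inr (Or.inl ⟨a, b, x, v, hab, rfl, rfl, ha.mono hsub⟩)
  · exact Or.inr (Or.inr ⟨a, b, x, v, hab, rfl, rfl, hb.mono hsub⟩)

theorem COe.tid_ne (h : H.COe e₁ e₂) : e₁.tid ≠ e₂.tid := by
  rcases h.2 with ⟨a, b, x, hab, rfl, rfl, -⟩ | ⟨a, b, x, v, hab, rfl, rfl, -⟩ |
    ⟨a, b, x, v, hab, rfl, rfl, -⟩ <;> exact hab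

theorem CO.ne (h : H.CO t₁ t₂) : t₁ ≠ t₂ := by
  obtain ⟨e₁, e₂, rfl, rfl, h⟩ := h
  exact h.tid_ne

theorem CGedge.mem_txns (h : H.CGedge t₁ t₂) : t₁ ∈ H.txns ∧ t₂ ∈ H.txns := by
  rcases h with h | ⟨e₁, e₂, rfl, rfl, h⟩
  · exact ⟨h.1, h.2.1⟩
  · exact ⟨⟨e₁, h.1.mem_left, rfl⟩, ⟨e₂, h.1.mem_right, rfl⟩⟩

theorem RT.trans (h₁₂ : S.RT t₁ t₂) (h₂₃ : S.RT t₂ t₃) : S.RT t₁ t₃ := by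
  obtain ⟨e₂, hm₂, rfl⟩ := h₁₂.2.1
  refine ⟨h₁₂.1, h₂₃.2.1, ?_, fun a c ha hc hta htc =>
    (h₁₂.2.2.2 a e₂ ha hm₂ hta rfl).trans (h₂₃.2.2.2 e₂ c hm₂ hc rfl htc)⟩
  rintro rfl
  obtain ⟨e₁, hm₁, ht₁⟩ := h₁₂.1
  exact (h₁₂.2.2.2 e₁ e₂ hm₁ hm₂ ht₁ rfl).asymm (h₂₃.2.2.2 e₂ e₁ hm₂ hm₁ rfl ht₁)

theorem TSequential.rt_of_co (hS : S.TSequential) (h : S.CO t₁ t₂) : S.RT t₁ t₂ := by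
  obtain ⟨e₁, e₂, rfl, rfl, hlt, -⟩ := id h
  refine (hS _ _ ⟨e₁, hlt.mem_left, rfl⟩ ⟨e₂, hlt.mem_right, rfl⟩ h.ne).resolve_right
    fun h₂₁ => hlt.asymm (h₂₁.2.2.2 _ _ hlt.mem_right hlt.mem_left rfl rfl)

theorem CoOpaque.cgAcyclic (h : H.CoOpaque) : H.CGAcyclic := by
  obtain ⟨-, -, S, -, hseq, -, -, hrt, hco⟩ := h
  have : IsTrans Tid S.RT := ⟨fun _ _ _ => RT.trans⟩
  intro t hcycle
  have : S.RT t t := by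
    rw [← Relation.transGen_eq_self (r := S.RT)]
    refine Relation.TransGen.mono (fun t₁ t₂ h => ?_) t t hcycle
    exact h.elim (hrt t₁ t₂) fun h => hseq.rt_of_co (hco t₁ t₂ h)
  exact this.2.2.1 rfl

def IsLast (H : History Tid Obj Val) (e : Ev Tid Obj Val) : Prop :=
  ∀ e', H.Mem e' → e'.tid = e.tid → e' = e ∨ H.Lt e' e

theorem exists_isLast (ht : t ∈ H.txns) : ∃ e, H.Mem e ∧ e.tid = t ∧ H.IsLast e := by
  classical
  obtain ⟨e₀, he₀, rfl⟩ := ht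
  obtain ⟨e, he, hmax⟩ := (H.evs.filter (·.tid = e₀.tid)).toFinset.exists_max_image
    H.evs.idxOf ⟨e₀, List.mem_toFinset.2 (List.mem_filter.2 ⟨he₀, by simp⟩)⟩
  simp only [List.mem_toFinset, List.mem_filter, decide_eq_true_eq] at he hmax
  refine ⟨e, he.1, he.2, fun e' he' ht' => or_iff_not_imp_left.2 fun hne => ?_⟩
  refine lt_iff_idxOf_lt.2 ⟨he', he.1, (hmax e' ⟨he', ht'.trans he.2⟩).lt_of_ne ?_⟩
  exact mt (List.idxOf_inj he').1 hne

theorem IsLast.eq (h₁ : H.IsLast e₁) (h₂ : H.IsLast e₂) (hm₁ : H.Mem e₁) (hm₂ : H.Mem e₂)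
    (ht : e₁.tid = e₂.tid) : e₁ = e₂ := by
  rcases h₂ e₁ hm₁ ht with h | h
  · exact h
  rcases h₁ e₂ hm₂ ht.symm with h' | h'
  · exact h'.symm
  · exact absurd h' h.asymm

open Classical in
noncomputable def completionBlock (H : History Tid Obj Val) (e : Ev Tid Obj Val) :
    List (Ev Tid Obj Val) :=
  if H.incomplete e.tid ∧ H.IsLast e then [e, .abort e.tid] else [e]

theorem mem_completionBlock :
    a ∈ H.completionBlock e ↔
      a = e ∨ H.incomplete e.tid ∧ H.IsLast e ∧ a = .abort e.tid := by
  unfold completionBlock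
  split_ifs with h
  · simp [h]
  · simpa using fun hinc hl => absurd ⟨hinc, hl⟩ h

theorem mem_completionBlock_self : e ∈ H.completionBlock e :=
  mem_completionBlock.2 (Or.inl rfl)

theorem eq_of_mem_completionBlock (ha : H.Mem a) (h : a ∈ H.completionBlock e) : a = e :=
  (mem_completionBlock.1 h).resolve_right fun ⟨hinc, _, hab⟩ => hinc.2.2 (by rwa [hab] at ha)

theorem abort_mem_completionBlock_iff (ht : H.incomplete t) (he : H.Mem e) :
    .abort t ∈ H.completionBlock e ↔ e.tid = t ∧ H.IsLast e := by
  rw [mem_completionBlock]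
  constructor
  · rintro (rfl | ⟨-, hl, h⟩)
    · exact absurd he ht.2.2
    · cases h
      exact ⟨rfl, hl⟩
  · rintro ⟨rfl, hl⟩
    exact Or.inr ⟨ht, hl, rfl⟩

theorem not_pair_sublist_completionBlock (he : H.Mem e) : ¬ [a, e] <+ H.completionBlock e := by
  unfold completionBlock
  split_ifs with h
  · intro hsub
    obtain ⟨-, hae⟩ : a = e ∧ e = .abort e.tid := by simpa using hsub.eq_of_length rfl
    exact h.1.2.2 (by rwa [hae] at he)
  · simp

theorem nodup_flatMap_completionBlock (H : History Tid Obj Val) :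
    (H.evs.flatMap H.completionBlock).Nodup := by
  refine List.nodup_flatMap.2 ⟨fun e he => ?_, H.nodup.imp_of_mem fun he₁ he₂ hne a h₁ h₂ => ?_⟩
  · unfold completionBlock
    split_ifs with h
    · simpa using fun hab => h.1.2.2 (by rwa [hab] at he)
    · exact List.nodup_singleton e
  · by_cases ha : H.Mem a
    · exact hne ((eq_of_mem_completionBlock ha h₁).symm.trans (eq_of_mem_completionBlock ha h₂))
    obtain ⟨-, hl₁, rfl⟩ := (mem_completionBlock.1 h₁).resolve_left fun h => ha (h ▸ he₁)
    obtain ⟨-, hl₂, h⟩ := (mem_completionBlock.1 h₂).resolve_left fun h => ha (h ▸ he₂)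
    exact hne (hl₁.eq hl₂ he₁ he₂ (Ev.abort.inj h))

noncomputable def completion (H : History Tid Obj Val) : History Tid Obj Val :=
  ⟨H.evs.flatMap H.completionBlock, H.nodup_flatMap_completionBlock⟩

theorem lt_completion_iff : H.completion.Lt e₁ e₂ ↔
    (∃ e, H.Mem e ∧ [e₁, e₂] <+ H.completionBlock e) ∨
      ∃ a₁ a₂, H.Lt a₁ a₂ ∧ e₁ ∈ H.completionBlock a₁ ∧ e₂ ∈ H.completionBlock a₂ := by
  simp only [lt_iff_sublist]
  exact List.pair_sublist_flatMap_iff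

theorem mem_completion_iff :
    H.completion.Mem a ↔ H.Mem a ∨ ∃ t, H.incomplete t ∧ a = .abort t := by
  refine ⟨fun h => ?_, ?_⟩
  · obtain ⟨e, he, ha⟩ := List.mem_flatMap.1 h
    exact (mem_completionBlock.1 ha).imp (fun h : a = e => h ▸ he)
      fun ⟨hinc, _, ha⟩ => ⟨_, hinc, ha⟩
  · rintro (ha | ⟨t, ht, rfl⟩)
    · exact List.mem_flatMap.2 ⟨a, ha, mem_completionBlock_self⟩
    · obtain ⟨e, he, rfl, hl⟩ := exists_isLast ht.1
      exact List.mem_flatMap.2 ⟨e, he, (abort_mem_completionBlock_iff ht he).2 ⟨rfl, hl⟩⟩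

theorem lt_iff_completion_lt (h₁ : H.Mem e₁) (h₂ : H.Mem e₂) :
    H.Lt e₁ e₂ ↔ H.completion.Lt e₁ e₂ := by
  rw [lt_completion_iff]
  refine ⟨fun h => Or.inr ⟨e₁, e₂, h, mem_completionBlock_self, mem_completionBlock_self⟩, ?_⟩
  rintro (⟨e, -, h⟩ | ⟨a₁, a₂, h, ha₁, ha₂⟩)
  · obtain rfl := eq_of_mem_completionBlock h₂ (h.subset (by simp))
    exact absurd h (not_pair_sublist_completionBlock h₂)
  · rwa [eq_of_mem_completionBlock h₁ ha₁, eq_of_mem_completionBlock h₂ ha₂]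

theorem lt_abort_completion (ht : H.incomplete t) (he : H.Mem e) (het : e.tid = t) :
    H.completion.Lt e (.abort t) := by
  obtain ⟨l, hl, rfl, hlast⟩ := exists_isLast ht.1
  rw [lt_completion_iff]
  rcases hlast e he het with rfl | h
  · exact Or.inl ⟨e, he, by rw [completionBlock, if_pos ⟨ht, hlast⟩, het]⟩
  · exact Or.inr ⟨e, l, h, mem_completionBlock_self,
      (abort_mem_completionBlock_iff ht hl).2 ⟨rfl, hlast⟩⟩

theorem abort_lt_completion_iff (ht : H.incomplete t) (he : H.Mem e) :
    H.completion.Lt (.abort t) e ↔ ∀ e', H.Mem e' → e'.tid = t → H.Lt e' e := by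
  refine ⟨fun h => ?_, fun h => ?_⟩
  · rcases lt_completion_iff.1 h with ⟨a, -, hsub⟩ | ⟨a₁, a₂, h₁₂, ha₁, ha₂⟩
    · obtain rfl := eq_of_mem_completionBlock he (hsub.subset (by simp))
      exact absurd hsub (not_pair_sublist_completionBlock he)
    obtain rfl := eq_of_mem_completionBlock he ha₂
    obtain ⟨rfl, hlast⟩ := (abort_mem_completionBlock_iff ht h₁₂.mem_left).1 ha₁
    intro e' he' ht'
    rcases hlast e' he' ht' with rfl | h'
    · exact h₁₂
    · exact h'.trans h₁₂
  · obtain ⟨l, hl, rfl, hlast⟩ := exists_isLast ht.1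
    exact lt_completion_iff.2 (Or.inr ⟨l, e, h l hl rfl,
      (abort_mem_completionBlock_iff ht hl).2 ⟨rfl, hlast⟩, mem_completionBlock_self⟩)

theorem isCompletion_completion (H : History Tid Obj Val) : H.IsCompletion H.completion :=
  ⟨fun _ => mem_completion_iff, fun _ _ => lt_iff_completion_lt, fun _ ht =>
    ⟨fun _ he het => lt_abort_completion ht he het, fun _ he => abort_lt_completion_iff ht he⟩⟩

open Classical in
noncomputable def serialize (Hc : History Tid Obj Val) (ts : List Tid) (hts : ts.Nodup) :
    History Tid Obj Val where
  evs := ts.flatMap fun t => Hc.evs.filter (·.tid = t)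
  nodup := List.nodup_flatMap.2 ⟨fun _ _ => Hc.nodup.filter _, hts.imp fun hne _ h₁ h₂ =>
    hne ((of_decide_eq_true (List.mem_filter.1 h₁).2).symm.trans
      (of_decide_eq_true (List.mem_filter.1 h₂).2))⟩

theorem mem_serialize : (Hc.serialize ts hts).Mem e ↔ Hc.Mem e ∧ e.tid ∈ ts := by
  simp [serialize, Mem, and_comm]

theorem serialize_lt_of_sublist (h₁ : Hc.Mem e₁) (h₂ : Hc.Mem e₂) (h : [e₁.tid, e₂.tid] <+ ts) :
    (Hc.serialize ts hts).Lt e₁ e₂ :=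
  lt_iff_sublist.2 <| List.pair_sublist_flatMap_iff.2 <|
    Or.inr ⟨_, _, h, List.mem_filter.2 ⟨h₁, by simp⟩, List.mem_filter.2 ⟨h₂, by simp⟩⟩

theorem serialize_lt_of_lt_of_tid_eq (h : Hc.Lt e₁ e₂) (ht : e₁.tid = e₂.tid) (hmem : e₁.tid ∈ ts) :
    (Hc.serialize ts hts).Lt e₁ e₂ := by
  classical
  refine lt_iff_sublist.2 (List.pair_sublist_flatMap_iff.2 (Or.inl ⟨_, hmem, ?_⟩))
  simpa [ht] using (lt_iff_sublist.1 h).filter fun e => decide (e.tid = e₁.tid)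

theorem serialize_rt (h₁ : t₁ ∈ (Hc.serialize ts hts).txns) (h₂ : t₂ ∈ (Hc.serialize ts hts).txns)
    (h : [t₁, t₂] <+ ts) : (Hc.serialize ts hts).RT t₁ t₂ := by
  refine ⟨h₁, h₂, fun h₁₂ => List.nodup_iff_sublist.1 hts t₁ (h₁₂ ▸ h), ?_⟩
  rintro e₁ e₂ he₁ he₂ rfl rfl
  exact serialize_lt_of_sublist (mem_serialize.1 he₁).1 (mem_serialize.1 he₂).1 h

theorem tSequential_serialize : (Hc.serialize ts hts).TSequential := by
  rintro t₁ t₂ h₁ h₂ hne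
  have hmem : ∀ {t}, t ∈ (Hc.serialize ts hts).txns → t ∈ ts := by
    rintro _ ⟨e, he, rfl⟩
    exact (mem_serialize.1 he).2
  exact (List.pair_sublist_or_pair_sublist (hmem h₁) (hmem h₂) hne).imp
    (serialize_rt h₁ h₂) (serialize_rt h₂ h₁)

theorem IsCompletion.mem_of_mem (hc : H.IsCompletion Hc) (h : Hc.Mem e)
    (hne : ∀ t, e ≠ .abort t) : H.Mem e :=
  ((hc.1 e).1 h).resolve_right fun ⟨t, _, het⟩ => hne t het

theorem IsCompletion.tid_mem_txns (hc : H.IsCompletion Hc) (h : Hc.Mem e) : e.tid ∈ H.txns := by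
  rcases (hc.1 e).1 h with h | ⟨t, ht, rfl⟩
  · exact ⟨e, h, rfl⟩
  · exact ht.1

theorem cgEdge_of_COe (h : H.COe e₁ e₂) : H.CGedge e₁.tid e₂.tid :=
  Or.inr ⟨e₁, e₂, rfl, rfl, h⟩

theorem serialize_equiv (hc : H.IsCompletion Hc) (htxns : ∀ t ∈ H.txns, t ∈ ts) :
    (Hc.serialize ts hts).Equiv Hc := fun _ =>
  mem_serialize.trans ⟨And.left, fun h => ⟨h, htxns _ (hc.tid_mem_txns h)⟩⟩

theorem mem_serialize_of_mem (hc : H.IsCompletion Hc) (htxns : ∀ t ∈ H.txns, t ∈ ts)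
    (h : H.Mem e) : (Hc.serialize ts hts).Mem e :=
  (serialize_equiv hc htxns e).2 ((hc.1 e).2 (Or.inl h))

theorem mem_of_mem_serialize (hc : H.IsCompletion Hc) (h : (Hc.serialize ts hts).Mem e)
    (hne : ∀ t, e ≠ .abort t) : H.Mem e :=
  hc.mem_of_mem (mem_serialize.1 h).1 hne

theorem serialize_lt_of_lt (hc : H.IsCompletion Hc) (htxns : ∀ t ∈ H.txns, t ∈ ts)
    (hcg : ∀ t₁ t₂, H.CGedge t₁ t₂ → [t₁, t₂] <+ ts) (h : H.Lt e₁ e₂)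
    (hconf : e₁.tid = e₂.tid ∨ H.CGedge e₁.tid e₂.tid) : (Hc.serialize ts hts).Lt e₁ e₂ := by
  rcases hconf with ht | hedge
  · exact serialize_lt_of_lt_of_tid_eq ((hc.2.1 _ _ h.mem_left h.mem_right).1 h) ht
      (htxns _ ⟨e₁, h.mem_left, rfl⟩)
  · exact serialize_lt_of_sublist ((hc.1 _).2 (Or.inl h.mem_left))
      ((hc.1 _).2 (Or.inl h.mem_right)) (hcg _ _ hedge)

theorem serialize_rt_of_rt (hc : H.IsCompletion Hc) (htxns : ∀ t ∈ H.txns, t ∈ ts)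
    (hcg : ∀ t₁ t₂, H.CGedge t₁ t₂ → [t₁, t₂] <+ ts) (h : H.RT t₁ t₂) :
    (Hc.serialize ts hts).RT t₁ t₂ := by
  have hmem : ∀ {t}, t ∈ H.txns → t ∈ (Hc.serialize ts hts).txns := by
    rintro _ ⟨e, he, rfl⟩
    exact ⟨e, mem_serialize_of_mem hc htxns he, rfl⟩
  exact serialize_rt (hmem h.1) (hmem h.2.1) (hcg _ _ (Or.inl h))

theorem serialize_co_of_co (hc : H.IsCompletion Hc) (htxns : ∀ t ∈ H.txns, t ∈ ts)
    (hcg : ∀ t₁ t₂, H.CGedge t₁ t₂ → [t₁, t₂] <+ ts) (h : H.CO t₁ t₂) :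
    (Hc.serialize ts hts).CO t₁ t₂ := by
  obtain ⟨e₁, e₂, rfl, rfl, hco⟩ := h
  exact ⟨e₁, e₂, rfl, rfl, hco.mono (fun _ => mem_serialize_of_mem hc htxns)
    (serialize_lt_of_lt hc htxns hcg hco.1 (Or.inr (cgEdge_of_COe hco)))⟩

theorem legal_serialize (hleg : H.Legal) (hc : H.IsCompletion Hc)
    (htxns : ∀ t ∈ H.txns, t ∈ ts) (hcg : ∀ t₁ t₂, H.CGedge t₁ t₂ → [t₁, t₂] <+ ts) :
    (Hc.serialize ts hts).Legal := by
  intro t x v hr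
  have hrH := mem_of_mem_serialize hc hr fun _ => nofun
  obtain ⟨i, hi, hwi, hmax, hwr⟩ := hleg t x v hrH
  have hlift : ∀ j, H.Lt (.commit j) (.read t x (some v)) → H.Wset j x →
      (Hc.serialize ts hts).Lt (.commit j) (.read t x (some v)) := fun j hj hw =>
    serialize_lt_of_lt hc htxns hcg hj <| (em (j = t)).imp_right fun hne =>
      cgEdge_of_COe ⟨hj, Or.inr (Or.inl ⟨j, t, x, v, hne, rfl, rfl, hw⟩)⟩
  refine ⟨i, hlift i hi hwi, hwi.mono fun _ => mem_serialize_of_mem hc htxns,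
    fun j hj ⟨w, hw⟩ => ?_, mem_serialize_of_mem hc htxns hwr⟩
  have hwj : H.Wset j x := ⟨w, mem_of_mem_serialize hc hw fun _ => nofun⟩
  have hcj := mem_of_mem_serialize hc hj.mem_left fun _ => nofun
  have hjH : H.Lt (.commit j) (.read t x (some v)) := by
    refine (lt_or_lt_of_ne hcj hrH nofun).resolve_right fun hrj => hj.asymm ?_
    exact serialize_lt_of_lt hc htxns hcg hrj <| (em (t = j)).imp_right fun hne =>
      cgEdge_of_COe ⟨hrj, Or.inr (Or.inr ⟨t, j, x, v, hne, rfl, rfl, hwj⟩)⟩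
  refine (hmax j hjH hwj).imp_right fun hji => serialize_lt_of_lt hc htxns hcg hji ?_
  exact (em (j = i)).imp_right fun hne =>
    cgEdge_of_COe ⟨hji, Or.inl ⟨j, i, x, hne, rfl, rfl, hwj, hwi⟩⟩

theorem CGAcyclic.coOpaque (hleg : H.Legal) (hac : H.CGAcyclic) : H.CoOpaque := by
  obtain ⟨ts, hts, hmem, hsorted⟩ := Relation.exists_topologicalSort hac (H.evs.map Ev.tid)
  have htxns : ∀ t ∈ H.txns, t ∈ ts := by
    rintro _ ⟨e, he, rfl⟩
    exact (hmem _).2 (List.mem_map_of_mem he)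
  have hcg : ∀ t₁ t₂, H.CGedge t₁ t₂ → [t₁, t₂] <+ ts := fun _ _ h =>
    hsorted _ (htxns _ h.mem_txns.1) _ (htxns _ h.mem_txns.2) h
  have hc := isCompletion_completion H
  exact ⟨hleg.valid, H.completion, H.completion.serialize ts hts, hc, tSequential_serialize,
    legal_serialize hleg hc htxns hcg, serialize_equiv hc htxns,
    fun _ _ => serialize_rt_of_rt hc htxns hcg, fun _ _ => serialize_co_of_co hc htxns hcg⟩

end STM.History

open STM History in
/-- Graph characterization of conflict-opacity: a legal history is
conflict-opaque iff its conflict graph is acyclic. -/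
theorem coOpaque_iff_cgAcyclic {Tid Obj Val : Type}
    (H : STM.History Tid Obj Val)
    (hleg : H.Legal) :
    H.CoOpaque ↔ H.CGAcyclic :=
  ⟨CoOpaque.cgAcyclic, CGAcyclic.coOpaque hleg⟩
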